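/- arXiv:1212.4632 — 3 statements merged into one kernel-verified Lean document; each statement's English description precedes it below -/
import Mathlib

section
/- Let 0 < s < 1 and 0 < δ ≤ 1. There exists a constant c_s > 0 (independent of δ and t) such that for every real t, ∫₀^δ (1 - cos(r t)) / r^{1+2s} dr ≥ c_s δ^{2-2s} min{ t², |t|^{2s} }. -/
open MeasureTheory Real

/-!
Near the origin `1 - cos(rt)` is comparable to `(rt)²`: it lies between `(2/π²)(rt)²`
(for `r|t| ≤ π`) and `(rt)²/2`. Integrating the lower bound over `(0, a]` with
`a = min δ |t|⁻¹` gives a constant times `t² a^{2-2s}`, which is `δ^{2-2s} t²` when `δ|t| ≤ 1`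
and `|t|^{2s}` otherwise.
-/

lemma integral_Ioc_zero_rpow {p a : ℝ} (hp : -1 < p) (ha : 0 ≤ a) :
    ∫ r in Set.Ioc 0 a, r ^ p = a ^ (p + 1) / (p + 1) := by
  rw [← intervalIntegral.integral_of_le ha, integral_rpow (Or.inl hp),
    zero_rpow (by linarith), sub_zero]

section OneSubCosDivRpow

variable {s t r : ℝ}

lemma sq_mul_div_rpow_one_add (hr : 0 < r) :
    (r * t) ^ 2 / r ^ (1 + 2 * s) = t ^ 2 * r ^ (1 - 2 * s) := by
  rw [div_eq_iff (rpow_pos_of_pos hr _).ne', mul_assoc, ← rpow_add hr,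
    show 1 - 2 * s + (1 + 2 * s) = ((2 : ℕ) : ℝ) by push_cast; ring, rpow_natCast]
  ring

lemma one_sub_cos_div_rpow_nonneg (hr : 0 < r) :
    0 ≤ (1 - cos (r * t)) / r ^ (1 + 2 * s) :=
  div_nonneg (sub_nonneg.2 (cos_le_one _)) (rpow_nonneg hr.le _)

lemma one_sub_cos_div_rpow_le (hr : 0 < r) :
    (1 - cos (r * t)) / r ^ (1 + 2 * s) ≤ t ^ 2 / 2 * r ^ (1 - 2 * s) :=
  calc (1 - cos (r * t)) / r ^ (1 + 2 * s) ≤ (r * t) ^ 2 / 2 / r ^ (1 + 2 * s) := by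
        gcongr; linarith [one_sub_sq_div_two_le_cos (x := r * t)]
    _ = t ^ 2 / 2 * r ^ (1 - 2 * s) := by
        rw [div_right_comm, sq_mul_div_rpow_one_add hr]; ring

lemma le_one_sub_cos_div_rpow (hr : 0 < r) (hrt : r * |t| ≤ π) :
    2 / π ^ 2 * t ^ 2 * r ^ (1 - 2 * s) ≤ (1 - cos (r * t)) / r ^ (1 + 2 * s) := by
  have hrt' : |r * t| ≤ π := by rwa [abs_mul, abs_of_pos hr]
  calc 2 / π ^ 2 * t ^ 2 * r ^ (1 - 2 * s) = 2 / π ^ 2 * (r * t) ^ 2 / r ^ (1 + 2 * s) := by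
        rw [mul_div_assoc, sq_mul_div_rpow_one_add hr]; ring
    _ ≤ (1 - cos (r * t)) / r ^ (1 + 2 * s) := by
        gcongr; linarith [cos_le_one_sub_mul_cos_sq hrt']

lemma integrableOn_one_sub_cos_div_rpow (hs : s < 1) (a : ℝ) :
    IntegrableOn (fun r => (1 - cos (r * t)) / r ^ (1 + 2 * s)) (Set.Ioc 0 a) := by
  have hdom : IntegrableOn (fun r : ℝ => t ^ 2 / 2 * r ^ (1 - 2 * s)) (Set.Ioc 0 a) :=
    (intervalIntegral.intervalIntegrable_rpow' (a := 0) (b := a) (by linarith)).1.const_mul _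
  refine hdom.mono' (Measurable.aestronglyMeasurable (by fun_prop)) ?_
  filter_upwards [ae_restrict_mem measurableSet_Ioc] with r hr
  rw [norm_of_nonneg (one_sub_cos_div_rpow_nonneg hr.1)]
  exact one_sub_cos_div_rpow_le hr.1

lemma integral_one_sub_cos_div_rpow_ge (hs : s < 1) {a : ℝ} (ha : 0 ≤ a) (hat : a * |t| ≤ π) :
    1 / (π ^ 2 * (1 - s)) * t ^ 2 * a ^ (2 - 2 * s) ≤
      ∫ r in Set.Ioc 0 a, (1 - cos (r * t)) / r ^ (1 + 2 * s) := by
  have hminor : IntegrableOn (fun r : ℝ => 2 / π ^ 2 * t ^ 2 * r ^ (1 - 2 * s)) (Set.Ioc 0 a) :=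
    (intervalIntegral.intervalIntegrable_rpow' (a := 0) (b := a) (by linarith)).1.const_mul _
  calc 1 / (π ^ 2 * (1 - s)) * t ^ 2 * a ^ (2 - 2 * s)
      = ∫ r in Set.Ioc 0 a, 2 / π ^ 2 * t ^ 2 * r ^ (1 - 2 * s) := by
        rw [integral_const_mul, integral_Ioc_zero_rpow (by linarith) ha,
          show 1 - 2 * s + 1 = 2 * (1 - s) by ring, show 2 - 2 * s = 2 * (1 - s) by ring]
        have : 1 - s ≠ 0 := by linarith
        field_simp
    _ ≤ ∫ r in Set.Ioc 0 a, (1 - cos (r * t)) / r ^ (1 + 2 * s) :=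
        setIntegral_mono_on hminor (integrableOn_one_sub_cos_div_rpow hs a) measurableSet_Ioc
          fun r hr => le_one_sub_cos_div_rpow hr.1
            ((mul_le_mul_of_nonneg_right hr.2 (abs_nonneg t)).trans hat)

lemma integral_one_sub_cos_div_rpow_mono (hs : s < 1) {a δ : ℝ} (haδ : a ≤ δ) :
    ∫ r in Set.Ioc 0 a, (1 - cos (r * t)) / r ^ (1 + 2 * s) ≤
      ∫ r in Set.Ioc 0 δ, (1 - cos (r * t)) / r ^ (1 + 2 * s) :=
  setIntegral_mono_set (integrableOn_one_sub_cos_div_rpow hs δ)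
    (by filter_upwards [ae_restrict_mem measurableSet_Ioc] with r hr
        exact one_sub_cos_div_rpow_nonneg hr.1)
    (Set.Ioc_subset_Ioc_right haδ).eventuallyLE

end OneSubCosDivRpow

lemma sq_mul_inv_abs_rpow {t : ℝ} (ht : t ≠ 0) (s : ℝ) :
    t ^ 2 * |t|⁻¹ ^ (2 - 2 * s) = |t| ^ (2 * s) := by
  have ht' : 0 < |t| := abs_pos.2 ht
  rw [inv_rpow ht'.le, ← rpow_neg ht'.le, ← sq_abs t, ← rpow_natCast, ← rpow_add ht']
  norm_num

lemma rpow_mul_min_le_sq_mul_min_rpow {s δ : ℝ} (hs : s < 1) (hδ : 0 ≤ δ) (hδ1 : δ ≤ 1) (t : ℝ) :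
    δ ^ (2 - 2 * s) * min (t ^ 2) (|t| ^ (2 * s)) ≤ t ^ 2 * min δ |t|⁻¹ ^ (2 - 2 * s) := by
  rcases eq_or_ne t 0 with rfl | ht
  · simpa using
      mul_nonpos_of_nonneg_of_nonpos (rpow_nonneg hδ (2 - 2 * s)) (min_le_left 0 (0 ^ (2 * s)))
  rcases min_cases δ |t|⁻¹ with ⟨hmin, -⟩ | ⟨hmin, -⟩
  · rw [hmin, mul_comm (t ^ 2)]
    exact mul_le_mul_of_nonneg_left (min_le_left _ _) (rpow_nonneg hδ _)
  · rw [hmin, sq_mul_inv_abs_rpow ht]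
    calc δ ^ (2 - 2 * s) * min (t ^ 2) (|t| ^ (2 * s)) ≤ 1 * |t| ^ (2 * s) :=
          mul_le_mul (rpow_le_one hδ hδ1 (by linarith)) (min_le_right _ _)
            (le_min (sq_nonneg t) (rpow_nonneg (abs_nonneg t) _)) zero_le_one
      _ = |t| ^ (2 * s) := one_mul _

theorem integral_one_sub_cos_lower_general (s : ℝ) (hs1 : s < 1) :
    ∃ c > 0, ∀ δ : ℝ, 0 < δ → δ ≤ 1 → ∀ t : ℝ,
      c * δ ^ (2 - 2 * s) * min (t ^ 2) (|t| ^ (2 * s)) ≤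
        ∫ r in Set.Ioc (0 : ℝ) δ, (1 - Real.cos (r * t)) / r ^ (1 + 2 * s) := by
  have h1s : 0 < 1 - s := by linarith
  refine ⟨1 / (π ^ 2 * (1 - s)), by positivity, fun δ hδ hδ1 t => ?_⟩
  set a := min δ |t|⁻¹
  have ha : 0 ≤ a := le_min hδ.le (inv_nonneg.2 (abs_nonneg t))
  have hat : a * |t| ≤ π := by
    calc a * |t| ≤ |t|⁻¹ * |t| := mul_le_mul_of_nonneg_right (min_le_right _ _) (abs_nonneg t)
      _ ≤ 1 := inv_mul_le_one_of_le₀ le_rfl (abs_nonneg t)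
      _ ≤ π := by linarith [pi_gt_three]
  calc 1 / (π ^ 2 * (1 - s)) * δ ^ (2 - 2 * s) * min (t ^ 2) (|t| ^ (2 * s))
      ≤ 1 / (π ^ 2 * (1 - s)) * t ^ 2 * a ^ (2 - 2 * s) := by
        rw [mul_assoc, mul_assoc]
        exact mul_le_mul_of_nonneg_left
          (rpow_mul_min_le_sq_mul_min_rpow hs1 hδ.le hδ1 t) (by positivity)
    _ ≤ ∫ r in Set.Ioc 0 a, (1 - cos (r * t)) / r ^ (1 + 2 * s) :=
        integral_one_sub_cos_div_rpow_ge hs1 ha hat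
    _ ≤ ∫ r in Set.Ioc 0 δ, (1 - cos (r * t)) / r ^ (1 + 2 * s) :=
        integral_one_sub_cos_div_rpow_mono hs1 (min_le_left _ _)

/-- For `0 < s < 1` there is `c_s > 0`, independent of `δ` and `t`, such that for all
`0 < δ ≤ 1` and every real `t`,
`∫₀^δ (1 - cos(rt)) / r^{1+2s} dr ≥ c_s δ^{2-2s} min{t², |t|^{2s}}`. -/
theorem integral_one_sub_cos_lower (s : ℝ) (hs : 0 < s) (hs1 : s < 1) :
    ∃ c > 0, ∀ δ : ℝ, 0 < δ → δ ≤ 1 → ∀ t : ℝ,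
      c * δ ^ (2 - 2 * s) * min (t ^ 2) (|t| ^ (2 * s)) ≤
        ∫ r in Set.Ioc (0 : ℝ) δ, (1 - Real.cos (r * t)) / r ^ (1 + 2 * s) :=
  integral_one_sub_cos_lower_general s hs1
end

section
/- Let v, v_* ∈ ℝ³, σ ∈ 𝕊² with (v−v_*)·σ ≥ 0, let v' = (v+v_*)/2 + (|v−v_*|/2)σ, and for λ ∈ [0,1] set v_λ = v + λ(v' − v). Then ⟨v⟩ ≤ (1+√2) ⟨v_λ⟩ ⟨v_*⟩ and ⟨v_λ⟩ ≤ (1+√2) ⟨v⟩ ⟨v_*⟩, where ⟨w⟩ = (1+|w|²)^{1/2}. -/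
/-!
Write `v'` for the post-collisional velocity. Since `v` and `vs` are antipodal on the sphere of
centre `(v + vs) / 2` through `v'`, Thales' theorem gives `(v - v') ⊥ (vs - v')`, and
`(v - vs)·σ ≥ 0` says `|v - v'| ≤ |vs - v'|`. Pythagoras then yields
`|v_λ - v| ≤ |v' - v| ≤ (√2/2)|v - vs|` and, as `v'` is the foot of the perpendicular from `vs`
to the line through `v` and `v'`, `|v - vs| ≤ √2 |v' - vs| ≤ √2 |v_λ - vs|`. Both bracket bounds
follow from `⟨a⟩ ≤ ⟨b⟩ + |a - b|` and `|a - b| ≤ ⟨a⟩⟨b⟩`.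
-/

open Real RealInnerProductSpace

section Bracket

variable {E : Type*} [SeminormedAddCommGroup E]

theorem sqrt_one_add_norm_sq_le_add_norm_sub (a b : E) :
    √(1 + ‖a‖ ^ 2) ≤ √(1 + ‖b‖ ^ 2) + ‖a - b‖ := by
  have hb : ‖b‖ ≤ √(1 + ‖b‖ ^ 2) := le_sqrt_of_sq_le (by linarith)
  have ha : ‖a‖ ≤ ‖b‖ + ‖a - b‖ := norm_le_norm_add_norm_sub' a b
  rw [sqrt_le_iff]
  refine ⟨by positivity, ?_⟩
  nlinarith [sq_sqrt (by positivity : (0 : ℝ) ≤ 1 + ‖b‖ ^ 2), norm_nonneg a,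
    norm_nonneg (a - b), norm_nonneg b]

theorem norm_sub_le_sqrt_one_add_norm_sq_mul (a b : E) :
    ‖a - b‖ ≤ √(1 + ‖a‖ ^ 2) * √(1 + ‖b‖ ^ 2) := by
  rw [← sqrt_mul (by positivity)]
  refine le_sqrt_of_sq_le ?_
  have := norm_sub_le a b
  nlinarith [sq_nonneg (‖a‖ * ‖b‖ - 1), norm_nonneg (a - b), norm_nonneg a, norm_nonneg b]

theorem sqrt_one_add_norm_sq_le_of_norm_sub_le {a c d : E} {K : ℝ} (hK : 0 ≤ K)
    (h : ‖a - d‖ ≤ K * ‖c - d‖) :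
    √(1 + ‖a‖ ^ 2) ≤ (1 + K) * √(1 + ‖c‖ ^ 2) * √(1 + ‖d‖ ^ 2) := by
  have hc : 1 ≤ √(1 + ‖c‖ ^ 2) := one_le_sqrt.2 (by simp)
  calc √(1 + ‖a‖ ^ 2) ≤ √(1 + ‖d‖ ^ 2) + K * ‖c - d‖ :=
        (sqrt_one_add_norm_sq_le_add_norm_sub a d).trans (by gcongr)
    _ ≤ √(1 + ‖c‖ ^ 2) * √(1 + ‖d‖ ^ 2) + K * (√(1 + ‖c‖ ^ 2) * √(1 + ‖d‖ ^ 2)) := by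
        gcongr
        · exact le_mul_of_one_le_left (by positivity) hc
        · exact norm_sub_le_sqrt_one_add_norm_sq_mul c d
    _ = (1 + K) * √(1 + ‖c‖ ^ 2) * √(1 + ‖d‖ ^ 2) := by ring

end Bracket

section InnerProductSpace

variable {F : Type*} [NormedAddCommGroup F] [InnerProductSpace ℝ F]

theorem norm_sub_le_norm_add_of_inner_nonneg {x y : F} (h : 0 ≤ ⟪x, y⟫) : ‖x - y‖ ≤ ‖x + y‖ := by
  refine le_of_pow_le_pow_left₀ two_ne_zero (norm_nonneg _) ?_
  rw [norm_sub_sq_real, norm_add_sq_real]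
  linarith

theorem norm_le_sqrt_two_div_two_mul_norm_sub {a b : F} (hab : ⟪a, b⟫ = 0) (h : ‖a‖ ≤ ‖b‖) :
    ‖a‖ ≤ √2 / 2 * ‖a - b‖ := by
  have hpy := norm_sub_sq_eq_norm_sq_add_norm_sq_real hab
  refine le_of_pow_le_pow_left₀ two_ne_zero (by positivity) ?_
  rw [mul_pow, div_pow, sq_sqrt zero_le_two]
  nlinarith [norm_nonneg a]

theorem norm_sub_le_sqrt_two_mul_norm_smul_sub {a b : F} (hab : ⟪a, b⟫ = 0) (h : ‖a‖ ≤ ‖b‖)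
    (c : ℝ) : ‖a - b‖ ≤ √2 * ‖c • a - b‖ := by
  have hpy := norm_sub_sq_eq_norm_sq_add_norm_sq_real hab
  have hpy' := norm_sub_sq_eq_norm_sq_add_norm_sq_real (by rw [inner_smul_left, hab, mul_zero] :
    ⟪c • a, b⟫ = 0)
  refine le_of_pow_le_pow_left₀ two_ne_zero (by positivity) ?_
  rw [mul_pow, sq_sqrt zero_le_two]
  nlinarith [norm_nonneg a, norm_nonneg (c • a)]

noncomputable def postCollisionVelocity (v vs σ : F) : F :=
  ((1 : ℝ) / 2) • (v + vs) + (‖v - vs‖ / 2) • σ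

variable (v vs : F) {σ : F}

theorem sub_postCollisionVelocity_left :
    v - postCollisionVelocity v vs σ = ((1 : ℝ) / 2) • (v - vs) - (‖v - vs‖ / 2) • σ := by
  unfold postCollisionVelocity; module

theorem sub_postCollisionVelocity_right :
    vs - postCollisionVelocity v vs σ = -(((1 : ℝ) / 2) • (v - vs) + (‖v - vs‖ / 2) • σ) := by
  unfold postCollisionVelocity; module

theorem inner_sub_postCollisionVelocity_eq_zero (hσ : ‖σ‖ = 1) :
    ⟪v - postCollisionVelocity v vs σ, vs - postCollisionVelocity v vs σ⟫ = 0 := by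
  rw [sub_postCollisionVelocity_left, sub_postCollisionVelocity_right, inner_neg_right,
    neg_eq_zero, real_inner_comm, real_inner_add_sub_eq_zero_iff, norm_smul, norm_smul, hσ]
  simp [div_eq_mul_inv, mul_comm]

theorem norm_sub_postCollisionVelocity_le (hpos : 0 ≤ ⟪v - vs, σ⟫) :
    ‖v - postCollisionVelocity v vs σ‖ ≤ ‖vs - postCollisionVelocity v vs σ‖ := by
  rw [sub_postCollisionVelocity_left, sub_postCollisionVelocity_right, norm_neg]
  refine norm_sub_le_norm_add_of_inner_nonneg ?_
  rw [real_inner_smul_left, real_inner_smul_right]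
  positivity

theorem norm_lineMap_sub_le (hσ : ‖σ‖ = 1) (hpos : 0 ≤ ⟪v - vs, σ⟫) {t : ℝ} (ht0 : 0 ≤ t)
    (ht1 : t ≤ 1) :
    ‖v + t • (postCollisionVelocity v vs σ - v) - v‖ ≤ √2 / 2 * ‖vs - v‖ := by
  set v' := postCollisionVelocity v vs σ
  calc ‖v + t • (v' - v) - v‖ = t * ‖v - v'‖ := by
        rw [add_sub_cancel_left, norm_smul, Real.norm_of_nonneg ht0, norm_sub_rev]
    _ ≤ ‖v - v'‖ := mul_le_of_le_one_left (norm_nonneg _) ht1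
    _ ≤ √2 / 2 * ‖(v - v') - (vs - v')‖ :=
        norm_le_sqrt_two_div_two_mul_norm_sub (inner_sub_postCollisionVelocity_eq_zero v vs hσ)
          (norm_sub_postCollisionVelocity_le v vs hpos)
    _ = √2 / 2 * ‖vs - v‖ := by rw [sub_sub_sub_cancel_right, norm_sub_rev]

theorem norm_sub_le_sqrt_two_mul_norm_lineMap_sub (hσ : ‖σ‖ = 1) (hpos : 0 ≤ ⟪v - vs, σ⟫)
    (t : ℝ) : ‖v - vs‖ ≤ √2 * ‖v + t • (postCollisionVelocity v vs σ - v) - vs‖ := by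
  set v' := postCollisionVelocity v vs σ
  calc ‖v - vs‖ = ‖(v - v') - (vs - v')‖ := by rw [sub_sub_sub_cancel_right]
    _ ≤ √2 * ‖(1 - t) • (v - v') - (vs - v')‖ :=
        norm_sub_le_sqrt_two_mul_norm_smul_sub (inner_sub_postCollisionVelocity_eq_zero v vs hσ)
          (norm_sub_postCollisionVelocity_le v vs hpos) _
    _ = √2 * ‖v + t • (v' - v) - vs‖ := by congr 2; module

end InnerProductSpace

/-- With `v' = (v+v_*)/2 + (|v-v_*|/2)σ`, `(v-v_*)·σ ≥ 0`, and `v_λ = v + λ(v'-v)` for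
`λ ∈ [0,1]`, the brackets satisfy `⟨v⟩ ≤ (1+√2)⟨v_λ⟩⟨v_*⟩` and
`⟨v_λ⟩ ≤ (1+√2)⟨v⟩⟨v_*⟩`, where `⟨w⟩ = (1+|w|²)^{1/2}`. -/
theorem bracket_bounds_along_collision (v vs σ : EuclideanSpace ℝ (Fin 3))
    (hσ : ‖σ‖ = 1) (hpos : (0 : ℝ) ≤ inner ℝ (v - vs) σ) (lam : ℝ)
    (hl0 : 0 ≤ lam) (hl1 : lam ≤ 1) :
    Real.sqrt (1 + ‖v‖ ^ 2) ≤
        (1 + Real.sqrt 2) *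
          Real.sqrt (1 + ‖v + lam • ((((1 : ℝ) / 2) • (v + vs) + (‖v - vs‖ / 2) • σ) - v)‖ ^ 2) *
          Real.sqrt (1 + ‖vs‖ ^ 2) ∧
      Real.sqrt (1 + ‖v + lam • ((((1 : ℝ) / 2) • (v + vs) + (‖v - vs‖ / 2) • σ) - v)‖ ^ 2) ≤
        (1 + Real.sqrt 2) * Real.sqrt (1 + ‖v‖ ^ 2) * Real.sqrt (1 + ‖vs‖ ^ 2) := by
  refine ⟨sqrt_one_add_norm_sq_le_of_norm_sub_le (by positivity)
    (norm_sub_le_sqrt_two_mul_norm_lineMap_sub v vs hσ hpos lam), ?_⟩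
  calc _ ≤ (1 + √2 / 2) * √(1 + ‖vs‖ ^ 2) * √(1 + ‖v‖ ^ 2) :=
        sqrt_one_add_norm_sq_le_of_norm_sub_le (by positivity)
          (norm_lineMap_sub_le v vs hσ hpos hl0 hl1)
    _ ≤ (1 + √2) * √(1 + ‖v‖ ^ 2) * √(1 + ‖vs‖ ^ 2) := by
        rw [mul_right_comm]
        gcongr
        linarith [sqrt_nonneg 2]
end

section
/- Let s ∈ (0,1) and γ ∈ ℝ with 1 + γ + 2s > −1. There exists a constant C such that for all v ∈ ℝ³ with |v| ≥ 1, ∫_{|v|/2}^{|v|} (1 + |v|² − t²)^{(1+γ+2s)/2} ⟨t⟩^{−(1+2s)} dt ≤ C ⟨v⟩^{1+γ}. -/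
/-!
On `[|v|/2, |v|]` the factor `⟨t⟩^{-(1+2s)}` is comparable to `⟨v⟩^{-(1+2s)}`, and
`1 + |v|² - t² = 1 + (|v| - t)(|v| + t)` lies between `1 + |v|(|v| - t)` and twice that.
The substitution `u = 1 + |v|(|v| - t)` then computes the remaining integral as
`|v|⁻¹ ∫₁^{1+|v|²/2} u^q du ≲ |v|⁻¹ ⟨v⟩^{2q+2}` with `q = (1+γ+2s)/2 > -1`, and `|v|⁻¹ ≤ √2 ⟨v⟩⁻¹`
for `|v| ≥ 1`; the powers of `⟨v⟩` add up to `⟨v⟩^{1+γ}`.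
-/

open MeasureTheory Set

theorem rpow_le_two_rpow_abs_mul_rpow {a b : ℝ} (q : ℝ) (hb : 0 < b) (hba : b ≤ a)
    (hab : a ≤ 2 * b) : a ^ q ≤ 2 ^ |q| * b ^ q := by
  rcases le_or_gt 0 q with hq | hq
  · rw [abs_of_nonneg hq, ← Real.mul_rpow zero_le_two hb.le]
    exact Real.rpow_le_rpow (hb.le.trans hba) hab hq
  · calc a ^ q ≤ b ^ q := Real.rpow_le_rpow_of_nonpos hb hba hq.le
      _ ≤ 2 ^ |q| * b ^ q :=
        le_mul_of_one_le_left (by positivity) (Real.one_le_rpow one_le_two (abs_nonneg q))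

theorem sqrt_one_add_sq_le_two_mul {r t : ℝ} (ht : r / 2 ≤ t) (hr : 0 ≤ r) :
    √(1 + r ^ 2) ≤ 2 * √(1 + t ^ 2) := by
  rw [Real.sqrt_le_left (by positivity), mul_pow, Real.sq_sqrt (by positivity)]
  nlinarith

theorem sqrt_one_add_sq_rpow_neg_le {r t p : ℝ} (hp : 0 ≤ p) (ht : r / 2 ≤ t) (hr : 0 ≤ r) :
    √(1 + t ^ 2) ^ (-p) ≤ 2 ^ p * √(1 + r ^ 2) ^ (-p) := by
  have h := Real.rpow_le_rpow_of_nonpos (x := √(1 + r ^ 2) / 2) (by positivity)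
    ((div_le_iff₀' two_pos).mpr (sqrt_one_add_sq_le_two_mul ht hr)) (neg_nonpos.mpr hp)
  rwa [Real.div_rpow (Real.sqrt_nonneg _) zero_le_two, Real.rpow_neg zero_le_two, div_inv_eq_mul,
    mul_comm] at h

theorem integral_one_add_mul_sub_rpow {r q : ℝ} (hr : 0 < r) (hq : -1 < q) :
    ∫ t in r / 2..r, (1 + r * (r - t)) ^ q = ((1 + r ^ 2 / 2) ^ (q + 1) - 1) / (r * (q + 1)) := by
  have hq1 : q + 1 ≠ 0 := by linarith
  simp_rw [show ∀ t, 1 + r * (r - t) = (1 + r ^ 2) - r * t from fun t => by ring]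
  rw [intervalIntegral.integral_comp_sub_mul (fun u => u ^ q) hr.ne', integral_rpow (Or.inl hq),
    show 1 + r ^ 2 - r * r = 1 by ring, show 1 + r ^ 2 - r * (r / 2) = 1 + r ^ 2 / 2 by ring,
    Real.one_rpow, smul_eq_mul]
  field_simp

theorem integral_Icc_one_add_mul_sub_rpow_le {r q : ℝ} (hr : 0 < r) (hq : -1 < q) :
    ∫ t in Icc (r / 2) r, (1 + r * (r - t)) ^ q ≤ (1 + r ^ 2) ^ (q + 1) / (r * (q + 1)) := by
  have hq1 : 0 < q + 1 := by linarith
  rw [integral_Icc_eq_integral_Ioc, ← intervalIntegral.integral_of_le (by linarith),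
    integral_one_add_mul_sub_rpow hr hq]
  gcongr
  calc (1 + r ^ 2 / 2) ^ (q + 1) - 1 ≤ (1 + r ^ 2 / 2) ^ (q + 1) := by linarith
    _ ≤ (1 + r ^ 2) ^ (q + 1) := by gcongr; linarith [sq_nonneg r]

theorem continuousOn_one_add_mul_sub_rpow (r q : ℝ) :
    ContinuousOn (fun t => (1 + r * (r - t)) ^ q) (Icc (r / 2) r) :=
  ContinuousOn.rpow_const (by fun_prop) fun t ht => Or.inl (by nlinarith [ht.1, ht.2])

theorem inv_le_sqrt_two_mul_inv_sqrt_one_add_sq {r : ℝ} (hr : 1 ≤ r) :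
    r⁻¹ ≤ √2 * (√(1 + r ^ 2))⁻¹ := by
  have hr0 : 0 < r := by linarith
  rw [← div_eq_mul_inv, le_div_iff₀ (by positivity), inv_mul_le_iff₀ hr0,
    Real.sqrt_le_left (by positivity), mul_pow, Real.sq_sqrt zero_le_two]
  nlinarith

theorem integral_Icc_half_weight_le {p q r : ℝ} (hp : 0 ≤ p) (hq : -1 < q) (hr : 1 ≤ r) :
    ∫ t in Icc (r / 2) r, (1 + r ^ 2 - t ^ 2) ^ q * √(1 + t ^ 2) ^ (-p) ≤
      2 ^ |q| * 2 ^ p * √2 / (q + 1) * √(1 + r ^ 2) ^ (2 * q + 1 - p) := by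
  have hr0 : 0 < r := by linarith
  have hq1 : 0 < q + 1 := by linarith
  set w := √(1 + r ^ 2)
  have hw0 : 0 < w := by positivity
  set K := 2 ^ |q| * 2 ^ p * w ^ (-p)
  have hpointwise : ∀ t ∈ Icc (r / 2) r,
      (1 + r ^ 2 - t ^ 2) ^ q * √(1 + t ^ 2) ^ (-p) ≤ K * (1 + r * (r - t)) ^ q := by
    rintro t ⟨ht₁, ht₂⟩
    have hbase := rpow_le_two_rpow_abs_mul_rpow q (a := 1 + r ^ 2 - t ^ 2)
      (by nlinarith : 0 < 1 + r * (r - t)) (by nlinarith) (by nlinarith)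
    calc (1 + r ^ 2 - t ^ 2) ^ q * √(1 + t ^ 2) ^ (-p)
        ≤ (2 ^ |q| * (1 + r * (r - t)) ^ q) * (2 ^ p * w ^ (-p)) :=
          mul_le_mul hbase (sqrt_one_add_sq_rpow_neg_le hp ht₁ hr0.le) (by positivity)
            (by positivity)
      _ = K * (1 + r * (r - t)) ^ q := by ring
  have hintegral : ∫ t in Icc (r / 2) r, (1 + r * (r - t)) ^ q ≤
      w ^ (2 * (q + 1)) / (r * (q + 1)) := by
    rw [Real.rpow_mul hw0.le, Real.rpow_two, Real.sq_sqrt (by positivity)]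
    exact integral_Icc_one_add_mul_sub_rpow_le hr0 hq
  calc ∫ t in Icc (r / 2) r, (1 + r ^ 2 - t ^ 2) ^ q * √(1 + t ^ 2) ^ (-p)
      ≤ ∫ t in Icc (r / 2) r, K * (1 + r * (r - t)) ^ q :=
        integral_mono_of_nonneg
          (ae_restrict_of_forall_mem measurableSet_Icc fun t ht =>
            mul_nonneg (Real.rpow_nonneg (by nlinarith [ht.1, ht.2]) q) (by positivity))
          ((continuousOn_one_add_mul_sub_rpow r q).integrableOn_Icc.const_mul K)
          (ae_restrict_of_forall_mem measurableSet_Icc hpointwise)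
    _ ≤ K * (w ^ (2 * (q + 1)) / (r * (q + 1))) := by
        rw [integral_const_mul]; gcongr
    _ ≤ K * (w ^ (2 * (q + 1)) * (√2 * w⁻¹) / (q + 1)) := by
        rw [div_mul_eq_div_div, div_eq_mul_inv _ r]
        gcongr
        exact inv_le_sqrt_two_mul_inv_sqrt_one_add_sq hr
    _ = 2 ^ |q| * 2 ^ p * √2 / (q + 1) * (w ^ (-p) * w ^ (2 * (q + 1)) * w ^ (-1 : ℝ)) := by
        rw [Real.rpow_neg_one]; ring
    _ = 2 ^ |q| * 2 ^ p * √2 / (q + 1) * w ^ (2 * q + 1 - p) := by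
        rw [← Real.rpow_add hw0, ← Real.rpow_add hw0]; ring_nf

theorem weight_integral_upper_general (s γ : ℝ) (hs : 0 < s)
    (hγ : 1 + γ + 2 * s > -1) :
    ∃ C : ℝ, ∀ v : EuclideanSpace ℝ (Fin 3), 1 ≤ ‖v‖ →
      (∫ t in Set.Icc (‖v‖ / 2) ‖v‖,
          (1 + ‖v‖ ^ 2 - t ^ 2) ^ ((1 + γ + 2 * s) / 2) *
            Real.sqrt (1 + t ^ 2) ^ (-(1 + 2 * s))) ≤
        C * Real.sqrt (1 + ‖v‖ ^ 2) ^ (1 + γ) := by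
  set q := (1 + γ + 2 * s) / 2 with hq
  refine ⟨2 ^ |q| * 2 ^ (1 + 2 * s) * √2 / (q + 1), fun v hv => ?_⟩
  have h := integral_Icc_half_weight_le (p := 1 + 2 * s) (q := q) (by linarith) (by linarith) hv
  rwa [show 2 * q + 1 - (1 + 2 * s) = 1 + γ by rw [hq]; ring] at h

/-- For `s ∈ (0,1)` and `γ` with `1+γ+2s > -1`, there exists `C` with
`∫_{|v|/2}^{|v|} (1+|v|²-t²)^{(1+γ+2s)/2} ⟨t⟩^{-(1+2s)} dt ≤ C ⟨v⟩^{1+γ}` for `|v| ≥ 1`. -/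
theorem weight_integral_upper (s γ : ℝ) (hs : 0 < s) (hs1 : s < 1)
    (hγ : 1 + γ + 2 * s > -1) :
    ∃ C : ℝ, ∀ v : EuclideanSpace ℝ (Fin 3), 1 ≤ ‖v‖ →
      (∫ t in Set.Icc (‖v‖ / 2) ‖v‖,
          (1 + ‖v‖ ^ 2 - t ^ 2) ^ ((1 + γ + 2 * s) / 2) *
            Real.sqrt (1 + t ^ 2) ^ (-(1 + 2 * s))) ≤
        C * Real.sqrt (1 + ‖v‖ ^ 2) ^ (1 + γ) :=
  weight_integral_upper_general s γ hs hγ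
end
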